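/- arXiv:2506.07952 — 7 statements merged into one kernel-verified Lean document; each statement's English description precedes it below -/
import Mathlib

section
/- Any normalized real-valued function F on a finite product lattice X = ∏_{i=1}^n X_i (each X_i a finite subset of ℝ) can be written as F = G − H where G and H are normalized submodular functions on X. -/
/-- Any normalized function on a finite product lattice is a difference of two
normalized submodular functions. -/
theorem stmt3 {n : ℕ} (X : Fin n → Set ℝ) (hfin : ∀ i, (X i).Finite)
    (xmin : Fin n → ℝ) (hxmin : xmin ∈ Set.univ.pi X)
    (hleast : ∀ x ∈ Set.univ.pi X, xmin ≤ x)
    (F : (Fin n → ℝ) → ℝ) (hnorm : F xmin = 0) :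
    ∃ G H : (Fin n → ℝ) → ℝ,
      G xmin = 0 ∧ H xmin = 0 ∧
      (∀ x ∈ Set.univ.pi X, ∀ y ∈ Set.univ.pi X,
        G (x ⊓ y) + G (x ⊔ y) ≤ G x + G y) ∧
      (∀ x ∈ Set.univ.pi X, ∀ y ∈ Set.univ.pi X,
        H (x ⊓ y) + H (x ⊔ y) ≤ H x + H y) ∧
      (∀ x ∈ Set.univ.pi X, F x = G x - H x) := by
  classical
  set s : (Fin n → ℝ) → ℝ := fun x => ∑ i, x i with hs
  set q : (Fin n → ℝ) → ℝ := fun x => (s x)^2 with hq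
  have hsum : ∀ x y : Fin n → ℝ, s (x ⊓ y) + s (x ⊔ y) = s x + s y := by
    intro x y
    simp only [hs]
    rw [← Finset.sum_add_distrib, ← Finset.sum_add_distrib]
    apply Finset.sum_congr rfl
    intro i _
    simpa using min_add_max (x i) (y i)
  have hgap : ∀ x y : Fin n → ℝ,
      q (x ⊓ y) + q (x ⊔ y) - q x - q y
        = 2 * (s (x ⊓ y) - s x) * (s (x ⊓ y) - s y) := by
    intro x y
    have h2 : s (x ⊔ y) = s x + s y - s (x ⊓ y) := by linarith [hsum x y]
    simp only [hq]
    rw [h2]; ring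
  have hle : ∀ x y : Fin n → ℝ, s (x ⊓ y) ≤ s x := by
    intro x y
    apply Finset.sum_le_sum
    intro i _
    exact min_le_left (x i) (y i)
  have hlt : ∀ x y : Fin n → ℝ, ¬ x ≤ y → s (x ⊓ y) < s x := by
    intro x y hxy
    have : ∃ i, ¬ x i ≤ y i := by
      by_contra h
      push_neg at h
      exact hxy (fun i => h i)
    obtain ⟨i, hi⟩ := this
    apply Finset.sum_lt_sum (fun j _ => min_le_left (x j) (y j))
    exact ⟨i, Finset.mem_univ i, min_lt_iff.mpr (Or.inr (not_le.mp hi))⟩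
  have hgap_nonneg : ∀ x y : Fin n → ℝ,
      0 ≤ q (x ⊓ y) + q (x ⊔ y) - q x - q y := by
    intro x y
    have l1 := hle x y
    have l2 : s (x ⊓ y) ≤ s y := by rw [inf_comm]; exact hle y x
    rw [hgap x y]
    nlinarith
  have hPfin : (Set.univ.pi X).Finite := Set.Finite.pi hfin
  set T := hPfin.toFinset with hT
  set B := (T ×ˢ T).filter (fun p => ¬ p.1 ≤ p.2 ∧ ¬ p.2 ≤ p.1) with hB
  set r : ((Fin n → ℝ) × (Fin n → ℝ)) → ℝ := fun p =>
    (F (p.1 ⊓ p.2) + F (p.1 ⊔ p.2) - F p.1 - F p.2) /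
    (q (p.1 ⊓ p.2) + q (p.1 ⊔ p.2) - q p.1 - q p.2) with hr
  set M := (insert (0:ℝ) (B.image r)).max' (Finset.insert_nonempty _ _) with hM
  have hM0 : 0 ≤ M := Finset.le_max' _ _ (Finset.mem_insert_self _ _)
  have hMr : ∀ p ∈ B, r p ≤ M := fun p hp =>
    Finset.le_max' _ _ (Finset.mem_insert_of_mem (Finset.mem_image_of_mem r hp))
  have key : ∀ x ∈ Set.univ.pi X, ∀ y ∈ Set.univ.pi X,
      F (x ⊓ y) + F (x ⊔ y) - F x - F y
        ≤ M * (q (x ⊓ y) + q (x ⊔ y) - q x - q y) := by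
    intro x hx y hy
    by_cases hxy : x ≤ y
    · have h1 : x ⊓ y = x := inf_eq_left.mpr hxy
      have h2 : x ⊔ y = y := sup_eq_right.mpr hxy
      rw [h1, h2]
      have hz : q x + q y - q x - q y = 0 := by ring
      rw [hz, mul_zero]; exact le_of_eq (by ring)
    · by_cases hyx : y ≤ x
      · have h1 : x ⊓ y = y := inf_eq_right.mpr hyx
        have h2 : x ⊔ y = x := sup_eq_left.mpr hyx
        rw [h1, h2]
        have hz : q y + q x - q x - q y = 0 := by ring
        rw [hz, mul_zero]; exact le_of_eq (by ring)
      · have h1 : s (x ⊓ y) < s x := hlt x y hxy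
        have h2 : s (x ⊓ y) < s y := by rw [inf_comm]; exact hlt y x hyx
        have hmem : (x, y) ∈ B := by
          simp only [hB, Finset.mem_filter, Finset.mem_product, hT,
            Set.Finite.mem_toFinset]
          exact ⟨⟨hx, hy⟩, hxy, hyx⟩
        clear hxy hyx
        have hgpos : 0 < q (x ⊓ y) + q (x ⊔ y) - q x - q y := by
          rw [hgap x y]
          have := mul_pos_of_neg_of_neg (a := s (x ⊓ y) - s x)
            (b := s (x ⊓ y) - s y) (by linarith [h1]) (by linarith [h2])
          nlinarith [this]
        have hrm := hMr (x, y) hmem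
        simp only [hr] at hrm
        exact (div_le_iff₀ hgpos).mp hrm
  refine ⟨fun x => F x + M * (q xmin - q x), fun x => M * (q xmin - q x),
    by simp [hnorm], by simp, ?_, ?_, ?_⟩
  · intro x hx y hy
    have k := key x hx y hy
    dsimp only
    nlinarith [k]
  · intro x hx y hy
    have k := mul_nonneg hM0 (hgap_nonneg x y)
    dsimp only
    nlinarith [k]
  · intro x hx; ring
end

section
/- Let F: X → ℝ be differentiable on X = ∏_{i=1}^n [a_i, b_i], and suppose there exists L_F ≥ 0 such that ∂F/∂x_i(x) − ∂F/∂x_i(x + a e_j) ≥ −L_F·a for all x ∈ X, i ≠ j, a > 0 with x + a e_j ∈ X. Then F can be written as F = G − H with G, H normalized submodular functions on X. -/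
open Finset Set

private lemma sumSingle_apply {n : ℕ} (s : Finset (Fin n)) (v : Fin n → ℝ) (k : Fin n) :
    (∑ j ∈ s, Pi.single j (v j)) k = if k ∈ s then v k else 0 := by
  rw [Finset.sum_apply]
  simp [Pi.single_apply, Finset.sum_ite_eq]

/-- Key lemma A: iterating the one-step condition. -/
private lemma keyA {n : ℕ} (a b : Fin n → ℝ)
    (F : (Fin n → ℝ) → ℝ) (F' : (Fin n → ℝ) → (Fin n → ℝ) →L[ℝ] ℝ)
    (LF : ℝ)
    (hcond : ∀ x ∈ Set.univ.pi fun i => Set.Icc (a i) (b i), ∀ i j : Fin n, i ≠ j →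
      ∀ t : ℝ, 0 < t →
      x + Pi.single j t ∈ (Set.univ.pi fun i => Set.Icc (a i) (b i)) →
      F' x (Pi.single i 1) - F' (x + Pi.single j t) (Pi.single i 1) ≥ -LF * t)
    (z v : Fin n → ℝ) (hz : z ∈ Set.univ.pi fun i => Set.Icc (a i) (b i))
    (hv : ∀ k, 0 ≤ v k) (hzv : z + v ∈ Set.univ.pi fun i => Set.Icc (a i) (b i))
    (i : Fin n) (hvi : v i = 0) :
    F' (z + v) (Pi.single i 1) ≤ F' z (Pi.single i 1) + LF * ∑ j, v j := by
  set S := Set.univ.pi fun i => Set.Icc (a i) (b i) with hS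
  have hmem : ∀ s : Finset (Fin n), z + ∑ j ∈ s, Pi.single j (v j) ∈ S := by
    intro s
    rw [hS, Set.mem_univ_pi]
    intro k
    have h1 := (Set.mem_univ_pi.mp hz) k
    have h2 := (Set.mem_univ_pi.mp hzv) k
    simp only [Set.mem_Icc] at h1 h2 ⊢
    have h2' : a k ≤ z k + v k ∧ z k + v k ≤ b k := by
      simpa using h2
    have hsa : (z + ∑ j ∈ s, Pi.single j (v j)) k = z k + (if k ∈ s then v k else 0) := by
      simp [sumSingle_apply]
    rw [hsa]
    by_cases hk : k ∈ s
    · simpa [hk] using h2'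
    · simpa [hk] using h1
  have main : ∀ s : Finset (Fin n),
      F' (z + ∑ j ∈ s, Pi.single j (v j)) (Pi.single i 1)
        ≤ F' z (Pi.single i 1) + LF * ∑ j ∈ s, v j := by
    intro s
    induction s using Finset.induction_on with
    | empty => simp
    | @insert j s hj ih =>
      rw [Finset.sum_insert hj, Finset.sum_insert hj]
      set w := ∑ k ∈ s, Pi.single k (v k) with hw
      rcases eq_or_lt_of_le (hv j) with hvj | hvj
      · have : Pi.single j (v j) = (0 : Fin n → ℝ) := by
          rw [← hvj]; simp
        rw [this]
        calc F' (z + (0 + w)) (Pi.single i 1) = F' (z + w) (Pi.single i 1) := by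
              rw [zero_add]
          _ ≤ F' z (Pi.single i 1) + LF * ∑ k ∈ s, v k := ih
          _ ≤ F' z (Pi.single i 1) + LF * (v j + ∑ k ∈ s, v k) := by
              rw [← hvj]; simp
      · have hij : i ≠ j := by
          rintro rfl; exact absurd hvi (ne_of_gt hvj)
        have hstep := hcond (z + w) (hmem s) i j hij (v j) hvj (by
          have : z + w + Pi.single j (v j) = z + ∑ k ∈ insert j s, Pi.single k (v k) := by
            rw [Finset.sum_insert hj, hw]; ring
          rw [this]; exact hmem _)
        have heq : z + (Pi.single j (v j) + w) = z + w + Pi.single j (v j) := by ring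
        rw [heq]
        have := ih
        nlinarith [hstep]
  have hv' : (∑ j : Fin n, Pi.single j (v j)) = v := by
    funext k
    rw [sumSingle_apply]
    simp
  have := main Finset.univ
  rwa [hv'] at this


/-- Key lemma B: submodularity defect of `F` is bounded. -/
private lemma keyB {n : ℕ} (a b : Fin n → ℝ)
    (F : (Fin n → ℝ) → ℝ) (F' : (Fin n → ℝ) → (Fin n → ℝ) →L[ℝ] ℝ)
    (hdiff : ∀ x ∈ Set.univ.pi fun i => Set.Icc (a i) (b i), HasFDerivAt F (F' x) x)
    (LF : ℝ) (hLF : 0 ≤ LF)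
    (hcond : ∀ x ∈ Set.univ.pi fun i => Set.Icc (a i) (b i), ∀ i j : Fin n, i ≠ j →
      ∀ t : ℝ, 0 < t →
      x + Pi.single j t ∈ (Set.univ.pi fun i => Set.Icc (a i) (b i)) →
      F' x (Pi.single i 1) - F' (x + Pi.single j t) (Pi.single i 1) ≥ -LF * t)
    (x y : Fin n → ℝ) (hx : x ∈ Set.univ.pi fun i => Set.Icc (a i) (b i))
    (hy : y ∈ Set.univ.pi fun i => Set.Icc (a i) (b i)) :
    F (x ⊓ y) + F (x ⊔ y) - F x - F y
      ≤ LF * (∑ i, (x i - (x ⊓ y) i)) * (∑ i, (y i - (x ⊓ y) i)) := by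
  set S := Set.univ.pi fun i => Set.Icc (a i) (b i) with hS
  set m : Fin n → ℝ := x ⊓ y with hm
  set u : Fin n → ℝ := fun i => x i - m i with hu
  set v : Fin n → ℝ := fun i => y i - m i with hv
  have hmx : ∀ i, m i = min (x i) (y i) := fun i => by
    rw [hm]; simp [Pi.inf_apply]
  have hMx : ∀ i, (x ⊔ y) i = max (x i) (y i) := fun i => by
    simp [Pi.sup_apply]
  have hunn : ∀ i, 0 ≤ u i := fun i => by
    rw [hu]; simp only; rw [hmx i]; simp [min_le_left]
  have hvnn : ∀ i, 0 ≤ v i := fun i => by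
    rw [hv]; simp only; rw [hmx i]; simp [min_le_right]
  have hdisj : ∀ i, u i = 0 ∨ v i = 0 := by
    intro i
    rcases min_choice (x i) (y i) with h | h
    · left; rw [hu]; simp only; rw [hmx i, h]; ring
    · right; rw [hv]; simp only; rw [hmx i, h]; ring
  have hxeq : m + u = x := by funext i; simp [hu]
  have hyeq : m + v = y := by funext i; simp [hv]
  have hMeq : m + u + v = x ⊔ y := by
    funext i
    have := min_add_max (x i) (y i)
    simp only [Pi.add_apply, hu, hv, hMx i]
    rw [hmx i] at *
    linarith
  -- membership of path points
  have hbox : ∀ w : Fin n → ℝ, (∀ k, a k ≤ w k ∧ w k ≤ b k) → w ∈ S := by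
    intro w hw; rw [hS, Set.mem_univ_pi]; intro k; exact Set.mem_Icc.mpr (hw k)
  have hxk : ∀ k, a k ≤ x k ∧ x k ≤ b k := by
    intro k; have := (Set.mem_univ_pi.mp hx) k; simpa [Set.mem_Icc] using this
  have hyk : ∀ k, a k ≤ y k ∧ y k ≤ b k := by
    intro k; have := (Set.mem_univ_pi.mp hy) k; simpa [Set.mem_Icc] using this
  have hpath1 : ∀ t ∈ Set.Icc (0:ℝ) 1, m + t • u ∈ S := by
    intro t ht
    obtain ⟨ht0, ht1⟩ := ht
    apply hbox
    intro k
    have h1 := hxk k; have h2 := hyk k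
    have hmk := hmx k
    have huk := hunn k
    constructor
    · simp only [Pi.add_apply, Pi.smul_apply, smul_eq_mul, hmk]
      have : a k ≤ min (x k) (y k) := le_min h1.1 h2.1
      nlinarith
    · simp only [Pi.add_apply, Pi.smul_apply, smul_eq_mul]
      have hmu : m k + u k = x k := by simp [hu]
      nlinarith [h1.2]
  have hpath2 : ∀ t ∈ Set.Icc (0:ℝ) 1, m + t • u + v ∈ S := by
    intro t ht
    obtain ⟨ht0, ht1⟩ := ht
    apply hbox
    intro k
    have h1 := hxk k; have h2 := hyk k
    have hmk := hmx k
    have huk := hunn k; have hvk := hvnn k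
    have hMk : m k + u k + v k = max (x k) (y k) := by
      have := congrFun hMeq k
      simpa [hMx k] using this
    have hMb : max (x k) (y k) ≤ b k := max_le h1.2 h2.2
    constructor
    · simp only [Pi.add_apply, Pi.smul_apply, smul_eq_mul, hmk]
      have : a k ≤ min (x k) (y k) := le_min h1.1 h2.1
      nlinarith
    · simp only [Pi.add_apply, Pi.smul_apply, smul_eq_mul]
      nlinarith
  -- the auxiliary function along the path
  set φ : ℝ → ℝ := fun t => F (m + t • u + v) - F (m + t • u) with hφ
  set φ' : ℝ → ℝ := fun t => F' (m + t • u + v) u - F' (m + t • u) u with hφ'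
  have hder : ∀ t ∈ Set.Icc (0:ℝ) 1, HasDerivAt φ (φ' t) t := by
    intro t ht
    have hline1 : HasDerivAt (fun s : ℝ => m + s • u) u t := by
      have h0 : HasDerivAt (fun s : ℝ => s • u) ((1:ℝ) • u) t :=
        (hasDerivAt_id t).smul_const u
      simpa using h0.const_add m
    have hline2 : HasDerivAt (fun s : ℝ => m + s • u + v) u t := hline1.add_const v
    have hF1 : HasDerivAt (fun s : ℝ => F (m + s • u + v)) (F' (m + t • u + v) u) t :=
      (hdiff _ (hpath2 t ht)).comp_hasDerivAt t hline2
    have hF2 : HasDerivAt (fun s : ℝ => F (m + s • u)) (F' (m + t • u) u) t :=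
      (hdiff _ (hpath1 t ht)).comp_hasDerivAt t hline1
    exact hF1.sub hF2
  -- representation of directional derivative
  have hrep : ∀ z : Fin n → ℝ, F' z u = ∑ i, u i * F' z (Pi.single i 1) := by
    intro z
    have hu' : u = ∑ i, Pi.single i (u i) := by
      funext k
      rw [sumSingle_apply]
      simp
    have hsingle : ∀ i : Fin n, (Pi.single i (u i) : Fin n → ℝ) = u i • (Pi.single i (1:ℝ) : Fin n → ℝ) := by
      intro i
      funext k
      simp [Pi.single_apply]
    calc F' z u = F' z (∑ i, Pi.single i (u i)) := by rw [← hu']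
      _ = ∑ i, u i * F' z (Pi.single i 1) := by
          rw [map_sum]
          refine Finset.sum_congr rfl fun i _ => ?_
          rw [hsingle i, map_smul, smul_eq_mul]
  -- bound on the derivative
  have hbound : ∀ t ∈ Set.Icc (0:ℝ) 1, φ' t ≤ LF * (∑ i, u i) * (∑ i, v i) := by
    intro t ht
    have hz1 : m + t • u ∈ S := hpath1 t ht
    have hz2 : (m + t • u) + v ∈ S := by
      have := hpath2 t ht
      rwa [show m + t • u + v = (m + t • u) + v from by ring] at this
    have hterm : ∀ i : Fin n,
        u i * F' (m + t • u + v) (Pi.single i 1) - u i * F' (m + t • u) (Pi.single i 1)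
          ≤ u i * (LF * ∑ j, v j) := by
      intro i
      rcases hdisj i with h0 | h0
      · rw [h0]; simp
      · have hA := keyA a b F F' LF hcond (m + t • u) v hz1 hvnn
          (by rwa [show (m + t • u) + v = m + t • u + v from by ring]) i h0
        have hui := hunn i
        have : F' (m + t • u + v) (Pi.single i 1)
            ≤ F' (m + t • u) (Pi.single i 1) + LF * ∑ j, v j := by
          rwa [show m + t • u + v = (m + t • u) + v from by ring]
        nlinarith
    have hV : 0 ≤ ∑ j, v j := Finset.sum_nonneg fun j _ => hvnn j
    calc φ' t = ∑ i, (u i * F' (m + t • u + v) (Pi.single i 1)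
          - u i * F' (m + t • u) (Pi.single i 1)) := by
          rw [hφ']; simp only; rw [hrep, hrep, ← Finset.sum_sub_distrib]
      _ ≤ ∑ i, u i * (LF * ∑ j, v j) := Finset.sum_le_sum fun i _ => hterm i
      _ = LF * (∑ i, u i) * (∑ i, v i) := by rw [← Finset.sum_mul]; ring
  -- mean value theorem
  have hcont : ContinuousOn φ (Set.Icc (0:ℝ) 1) :=
    fun t ht => (hder t ht).continuousAt.continuousWithinAt
  obtain ⟨c, hc, hceq⟩ := exists_hasDerivAt_eq_slope φ φ' (by norm_num : (0:ℝ) < 1)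
    hcont (fun t ht => hder t (Set.mem_Icc.mpr ⟨le_of_lt ht.1, le_of_lt ht.2⟩))
  have hcmem : c ∈ Set.Icc (0:ℝ) 1 := ⟨le_of_lt hc.1, le_of_lt hc.2⟩
  have h10 : φ 1 - φ 0 ≤ LF * (∑ i, u i) * (∑ i, v i) := by
    have := hbound c hcmem
    rw [hceq] at this
    have h1 : (φ 1 - φ 0) / (1 - 0) = φ 1 - φ 0 := by norm_num
    linarith [this, h1 ▸ this]
  have hφ1 : φ 1 = F (x ⊔ y) - F x := by
    rw [hφ]; simp only [one_smul]
    rw [hMeq, hxeq]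
  have hφ0 : φ 0 = F y - F m := by
    rw [hφ]; simp only [zero_smul, add_zero]
    rw [hyeq]
  have hUu : (∑ i, (x i - (x ⊓ y) i)) = ∑ i, u i := by
    apply Finset.sum_congr rfl; intro i _; rw [hu]
  have hVv : (∑ i, (y i - (x ⊓ y) i)) = ∑ i, v i := by
    apply Finset.sum_congr rfl; intro i _; rw [hv]
  rw [hUu, hVv]
  rw [hφ1, hφ0] at h10
  linarith

/-- A differentiable normalized function on a box whose partial derivatives satisfy the
approximate antitonicity condition with constant `L_F` is a difference of two normalized
submodular functions. -/
theorem stmt5 {n : ℕ} (a b : Fin n → ℝ) (hab : ∀ i, a i ≤ b i)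
    (S : Set (Fin n → ℝ)) (hS : S = Set.univ.pi fun i => Set.Icc (a i) (b i))
    (F : (Fin n → ℝ) → ℝ) (F' : (Fin n → ℝ) → (Fin n → ℝ) →L[ℝ] ℝ)
    (hdiff : ∀ x ∈ S, HasFDerivAt F (F' x) x)
    (hnorm : F a = 0)
    (LF : ℝ) (hLF : 0 ≤ LF)
    (hcond : ∀ x ∈ S, ∀ i j : Fin n, i ≠ j → ∀ t : ℝ, 0 < t →
      x + Pi.single j t ∈ S →
      F' x (Pi.single i 1) - F' (x + Pi.single j t) (Pi.single i 1) ≥ -LF * t) :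
    ∃ G H : (Fin n → ℝ) → ℝ,
      G a = 0 ∧ H a = 0 ∧
      (∀ x ∈ S, ∀ y ∈ S, G (x ⊓ y) + G (x ⊔ y) ≤ G x + G y) ∧
      (∀ x ∈ S, ∀ y ∈ S, H (x ⊓ y) + H (x ⊔ y) ≤ H x + H y) ∧
      (∀ x ∈ S, F x = G x - H x) := by
  subst hS
  set S := Set.univ.pi fun i => Set.Icc (a i) (b i) with hS
  set H : (Fin n → ℝ) → ℝ := fun x => -(LF / 2) * (∑ i, (x i - a i)) ^ 2 with hH
  have hHid : ∀ x y : Fin n → ℝ, H x + H y - H (x ⊓ y) - H (x ⊔ y)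
      = LF * (∑ i, (x i - (x ⊓ y) i)) * (∑ i, (y i - (x ⊓ y) i)) := by
    intro x y
    simp only [hH]
    set P := ∑ i, ((x ⊓ y) i - a i) with hP
    set X := ∑ i, (x i - a i) with hX
    set Y := ∑ i, (y i - a i) with hY
    have hZ : ∑ i, ((x ⊔ y) i - a i) = X + Y - P := by
      have hterm : ∀ i ∈ Finset.univ, ((x ⊔ y) i - a i)
          = (x i - a i) + (y i - a i) - ((x ⊓ y) i - a i) := by
        intro i _
        have := min_add_max (x i) (y i)
        simp only [Pi.inf_apply, Pi.sup_apply]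
        linarith
      rw [Finset.sum_congr rfl hterm, Finset.sum_sub_distrib, Finset.sum_add_distrib]
    have hU : ∑ i, (x i - (x ⊓ y) i) = X - P := by
      rw [hX, hP, ← Finset.sum_sub_distrib]
      exact Finset.sum_congr rfl fun i _ => by ring
    have hV : ∑ i, (y i - (x ⊓ y) i) = Y - P := by
      rw [hY, hP, ← Finset.sum_sub_distrib]
      exact Finset.sum_congr rfl fun i _ => by ring
    rw [hU, hV, hZ]
    ring
  have hUnn : ∀ x y : Fin n → ℝ, 0 ≤ ∑ i, (x i - (x ⊓ y) i) := by
    intro x y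
    refine Finset.sum_nonneg fun i _ => ?_
    have : (x ⊓ y) i ≤ x i := by
      simp only [Pi.inf_apply]; exact min_le_left _ _
    linarith
  have hVnn : ∀ x y : Fin n → ℝ, 0 ≤ ∑ i, (y i - (x ⊓ y) i) := by
    intro x y
    refine Finset.sum_nonneg fun i _ => ?_
    have : (x ⊓ y) i ≤ y i := by
      simp only [Pi.inf_apply]; exact min_le_right _ _
    linarith
  refine ⟨fun x => F x + H x, H, by simp [hH, hnorm], by simp [hH], ?_, ?_, ?_⟩
  · intro x hx y hy
    have hB := keyB a b F F' hdiff LF hLF hcond x y hx hy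
    have hid := hHid x y
    simp only
    nlinarith [hB, hid]
  · intro x hx y hy
    have hid := hHid x y
    have h0 : 0 ≤ LF * (∑ i, (x i - (x ⊓ y) i)) * (∑ i, (y i - (x ⊓ y) i)) :=
      mul_nonneg (mul_nonneg hLF (hUnn x y)) (hVnn x y)
    linarith
  · intro x hx; ring
end

section
/- The function F(x) = ‖x‖_q^q for q ∈ [0,1) (with F = ‖·‖_0 when q = 0), defined on a product X of closed intervals with 0 in the interior of X, is modular (separable) but is not expressible as the difference of two proper lower semicontinuous convex functions on any neighborhood of 0; that is, F is not a DC function. -/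
open Filter

/-- `‖x‖_q^q` for `q ∈ [0,1)` is modular on a box containing `0` in its interior,
but is not a DC function on any neighborhood of `0`. -/
theorem stmt6 {n : ℕ} (hn : 1 ≤ n) (a b : Fin n → ℝ)
    (S : Set (Fin n → ℝ)) (hS : S = Set.univ.pi fun i => Set.Icc (a i) (b i))
    (h0 : (0 : Fin n → ℝ) ∈ interior S)
    (q : ℝ) (hq0 : 0 ≤ q) (hq1 : q < 1)
    (F : (Fin n → ℝ) → ℝ)
    (hF : ∀ x, F x = ∑ i, if x i = 0 then 0 else |x i| ^ q) :
    (∀ x ∈ S, ∀ y ∈ S, F (x ⊓ y) + F (x ⊔ y) = F x + F y) ∧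
    ∀ U ∈ nhds (0 : Fin n → ℝ), ¬ ∃ g h : (Fin n → ℝ) → ℝ,
      ConvexOn ℝ U g ∧ ConvexOn ℝ U h ∧ ∀ x ∈ U, F x = g x - h x := by
  constructor
  · intro x _ y _
    simp only [hF, ← Finset.sum_add_distrib]
    refine Finset.sum_congr rfl fun i _ => ?_
    rcases le_total (x i) (y i) with h | h
    · simp [Pi.inf_apply, Pi.sup_apply, min_eq_left h, max_eq_right h]
    · simp [Pi.inf_apply, Pi.sup_apply, min_eq_right h, max_eq_left h, add_comm]
  · intro U hU ⟨g, h, hg, hh, hgh⟩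
    set i0 : Fin n := ⟨0, hn⟩ with hi0
    set e₁ : Fin n → ℝ := Pi.single i0 (1:ℝ) with he₁
    -- F vanishes at 0 and F (t • e₁) = t ^ q for t > 0
    have hF0 : F 0 = 0 := by simp [hF]
    have hFt : ∀ t : ℝ, 0 < t → F (t • e₁) = t ^ q := by
      intro t ht
      rw [hF, Finset.sum_eq_single i0]
      · simp [he₁, Pi.single_apply, ht.ne', abs_of_pos ht]
      · intro i _ hi
        simp [he₁, Pi.single_apply, hi]
      · simp
    -- find ε so that the segment lies in U
    have h0U : (0 : Fin n → ℝ) ∈ U := mem_of_mem_nhds hU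
    have hcont : Continuous fun t : ℝ => t • e₁ := by continuity
    have hVU : (fun t : ℝ => t • e₁) ⁻¹' U ∈ nhds (0:ℝ) := by
      have := hcont.continuousAt (x := (0:ℝ))
      apply this
      simpa using hU
    obtain ⟨ε, hε, hball⟩ := Metric.mem_nhds_iff.1 hVU
    set e : ℝ := ε / 2 with hedef
    have he : 0 < e := by positivity
    have hmem : ∀ s : ℝ, |s| ≤ e → s • e₁ ∈ U := by
      intro s hs
      apply hball
      simp only [Metric.mem_ball, Real.dist_eq, sub_zero]
      calc |s| ≤ e := hs
        _ < ε := by simp [hedef]; linarith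
    have hpU : e • e₁ ∈ U := hmem e (by rw [abs_of_pos he])
    have hmU : (-e) • e₁ ∈ U := hmem (-e) (by rw [abs_neg, abs_of_pos he])
    -- constants
    set A : ℝ := g (e • e₁) with hA
    set C : ℝ := h ((-e) • e₁) with hC
    set K : ℝ := A - g 0 - h 0 + C with hK
    have hBD : g 0 = h 0 := by
      have := hgh 0 h0U
      rw [hF0] at this
      linarith
    -- the key inequality: e * t ^ q ≤ t * K for 0 < t < e
    have key : ∀ t : ℝ, 0 < t → t < e → e * t ^ q ≤ t * K := by
      intro t ht hte
      have htU : t • e₁ ∈ U := hmem t (by rw [abs_of_pos ht]; linarith)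
      -- upper bound on g along the segment
      have ha1 : (0:ℝ) ≤ 1 - t/e := by
        rw [sub_nonneg]; exact div_le_one_of_le₀ hte.le he.le
      have ha2 : (0:ℝ) ≤ t/e := by positivity
      have ha3 : (1 - t/e) + t/e = 1 := by ring
      have hg2 := hg.2 h0U hpU ha1 ha2 ha3
      rw [smul_zero, zero_add, smul_smul, div_mul_cancel₀ _ he.ne'] at hg2
      have hg3 : e * g (t • e₁) ≤ e * g 0 + t * A - t * g 0 := by
        have := mul_le_mul_of_nonneg_left hg2 he.le
        calc e * g (t • e₁) ≤ e * ((1 - t/e) • g 0 + (t/e) • A) := this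
          _ = e * g 0 + t * A - t * g 0 := by
              simp only [smul_eq_mul]; field_simp; ring
      -- lower bound on h along the segment
      have hte0 : (0:ℝ) < t + e := by linarith
      have hb1 : (0:ℝ) ≤ t/(t+e) := by positivity
      have hb2 : (0:ℝ) ≤ e/(t+e) := by positivity
      have hb3 : t/(t+e) + e/(t+e) = 1 := by field_simp
      have hh2 := hh.2 hmU htU hb1 hb2 hb3
      have hcomb : (t/(t+e)) • ((-e) • e₁) + (e/(t+e)) • (t • e₁) = (0 : Fin n → ℝ) := by
        rw [smul_smul, smul_smul, ← add_smul]
        have hcoef : t/(t+e) * -e + e/(t+e) * t = 0 := by field_simp; ring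
        rw [hcoef, zero_smul]
      rw [hcomb] at hh2
      have hh3 : (t + e) * h 0 ≤ t * C + e * h (t • e₁) := by
        have := mul_le_mul_of_nonneg_left hh2 hte0.le
        calc (t+e) * h 0 ≤ (t+e) * ((t/(t+e)) • C + (e/(t+e)) • h (t • e₁)) := this
          _ = t * C + e * h (t • e₁) := by
              simp only [smul_eq_mul]; field_simp
      -- combine
      have hFt' := hgh (t • e₁) htU
      rw [hFt t ht] at hFt'
      have hmul : e * g (t • e₁) - e * h (t • e₁) = e * t ^ q := by
        linear_combination e * hFt'.symm
      have heg : e * g 0 = e * h 0 := by rw [hBD]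
      have hKdef : t * K = t * A - t * g 0 - t * h 0 + t * C := by rw [hK]; ring
      linarith
    -- choose t small enough that e * t ^ q > t * K
    set M : ℝ := K / e with hM
    set M' : ℝ := max M 0 + 1 with hM'
    have hM'pos : 0 < M' := by positivity
    have hq' : 0 < 1 - q := by linarith
    have htend : Tendsto (fun t : ℝ => t ^ (1 - q)) (nhds 0) (nhds 0) := by
      have h1 : ContinuousAt (fun t : ℝ => t ^ (1 - q)) 0 :=
        Real.continuousAt_rpow_const 0 (1 - q) (Or.inr hq'.le)
      have := h1.tendsto
      rwa [Real.zero_rpow hq'.ne'] at this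
    have hev : ∀ᶠ t in nhdsWithin (0:ℝ) (Set.Ioi 0),
        t ^ (1 - q) < 1 / M' ∧ t < e ∧ 0 < t := by
      refine Filter.Eventually.and ?_ (Filter.Eventually.and ?_ ?_)
      · exact (htend.eventually_lt_const (by positivity)).filter_mono nhdsWithin_le_nhds
      · exact (eventually_lt_nhds he).filter_mono nhdsWithin_le_nhds
      · exact eventually_mem_nhdsWithin.mono fun t ht => ht
    obtain ⟨t, h1t, h2t, h3t⟩ := hev.exists
    have hkey := key t h3t h2t
    -- derive t * K < e * t ^ q
    have htq : 0 < t ^ q := Real.rpow_pos_of_pos h3t q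
    have hsplit : t = t ^ q * t ^ (1 - q) := by
      rw [← Real.rpow_add h3t]; simp
    have h5 : M' * t ^ (1 - q) < 1 := by
      have := (mul_lt_mul_iff_right₀ hM'pos).2 h1t
      rwa [mul_one_div, div_self hM'pos.ne'] at this
    have h6 : M * t < t ^ q := by
      have hMM' : M < M' := by
        have : M ≤ max M 0 := le_max_left _ _
        linarith
      calc M * t < M' * t := by
            exact (mul_lt_mul_iff_left₀ h3t).2 hMM'
        _ = t ^ q * (M' * t ^ (1 - q)) := by nth_rewrite 1 [hsplit]; ring
        _ < t ^ q * 1 := by exact (mul_lt_mul_iff_right₀ htq).2 h5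
        _ = t ^ q := mul_one _
    -- but key gives e * t ^ q ≤ t * K, i.e. t ^ q ≤ M * t
    have h7 : t ^ q ≤ M * t := by
      rw [hM]
      rw [div_mul_eq_mul_div, le_div_iff₀ he]
      linarith [hkey]
    linarith
end

section
/- For q ∈ (0,1) and scalars x, y of the same sign with x, y ≠ 0, one has | |y|^q − |x|^q | ≤ 2·max{|x|,|y|}^{q−1} · |y − x|. -/
lemma aux7 (q a b : ℝ) (hq0 : 0 < q) (hq1 : q < 1) (ha : 0 < a) (hab : a ≤ b) :
    |b ^ q - a ^ q| ≤ 2 * b ^ (q - 1) * (b - a) := by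
  have hb : 0 < b := lt_of_lt_of_le ha hab
  have h1 : a ^ q ≤ b ^ q := Real.rpow_le_rpow ha.le hab hq0.le
  rw [abs_of_nonneg (by linarith)]
  have h2 : b ^ (q - 1) ≤ a ^ (q - 1) :=
    Real.rpow_le_rpow_of_nonpos ha hab (by linarith)
  have hbq : b ^ (q - 1) * b = b ^ q := by
    rw [← Real.rpow_add_one hb.ne']; ring_nf
  have haq : a ^ (q - 1) * a = a ^ q := by
    rw [← Real.rpow_add_one ha.ne']; ring_nf
  have h3 : b ^ (q - 1) * a ≤ a ^ q := by
    rw [← haq]; exact mul_le_mul_of_nonneg_right h2 ha.le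
  have h4 : 0 < b ^ (q - 1) := Real.rpow_pos_of_pos hb _
  nlinarith [mul_nonneg h4.le (sub_nonneg.mpr hab)]

/-- Hölder-type bound: for `q ∈ (0,1)` and nonzero scalars of the same sign,
`||y|^q − |x|^q| ≤ 2·max(|x|,|y|)^(q−1)·|y − x|`. -/
theorem stmt7 (q : ℝ) (hq0 : 0 < q) (hq1 : q < 1)
    (x y : ℝ) (hx : x ≠ 0) (hy : y ≠ 0) (hxy : 0 < x * y) :
    |(|y| ^ q) - (|x| ^ q)| ≤ 2 * (max |x| |y|) ^ (q - 1) * |y - x| := by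
  have hx0 : 0 < |x| := abs_pos.mpr hx
  have hy0 : 0 < |y| := abs_pos.mpr hy
  have hsame : ∀ c d : ℝ, 0 < c * d → |(|d| - |c|)| = |d - c| := by
    intro c d hcd
    rcases lt_or_gt_of_ne (fun h => by simp [h] at hcd : c ≠ 0) with hc | hc
    · have hd : d < 0 := by nlinarith
      rw [abs_of_neg hc, abs_of_neg hd]
      rw [show -d - -c = -(d - c) by ring, abs_neg]
    · have hd : 0 < d := by nlinarith
      rw [abs_of_pos hc, abs_of_pos hd]
  rcases le_total |x| |y| with h | h
  · have e : |y - x| = |y| - |x| := by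
      rw [← hsame x y hxy, abs_of_nonneg (by linarith)]
    rw [max_eq_right h, e]
    exact aux7 q |x| |y| hq0 hq1 hx0 h
  · have e : |y - x| = |x| - |y| := by
      rw [← hsame x y hxy, abs_of_nonpos (by linarith), neg_sub]
    rw [max_eq_left h, e, abs_sub_comm]
    exact aux7 q |y| |x| hq0 hq1 hy0 h
end

section
/- Any quadratic F(x) = x^⊤ Q x on ℤ^n can be written as the difference of two L^♮-convex quadratics G(x) = x^⊤(Q^− + D)x and H(x) = −x^⊤(−Q^+ + D)x, where Q^− = min{Q,0}, Q^+ = max{Q,0} entrywise, and D is the diagonal matrix with D_{ii} = max{−∑_j Q^−_{ij}, −∑_j Q^−_{ji}, ∑_j Q^+_{ij}, ∑_j Q^+_{ji}}. -/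
/-- `L^♮`-convexity of a function on `ℤⁿ` (discrete midpoint convexity). -/
def IsLnatConvex {n : ℕ} (g : (Fin n → ℤ) → ℝ) : Prop :=
  ∀ x y : Fin n → ℤ,
    g (fun i => Int.fdiv (x i + y i) 2) + g (fun i => Int.fdiv (x i + y i + 1) 2) ≤ g x + g y

lemma sq_par_le (a b : ℤ) (h1 : -1 ≤ b) (h2 : b ≤ 1) (h3 : (a - b) % 2 = 0) : b ^ 2 ≤ a ^ 2 := by
  interval_cases b
  · have : a ≤ -1 ∨ 1 ≤ a := by omega
    rcases this with h | h <;> nlinarith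
  · simpa using sq_nonneg a
  · have : a ≤ -1 ∨ 1 ≤ a := by omega
    rcases this with h | h <;> nlinarith

lemma lnat_of_matrix {n : ℕ} (M : Matrix (Fin n) (Fin n) ℝ)
    (hoff : ∀ i j, i ≠ j → M i j + M j i ≤ 0)
    (hrow : ∀ i, 0 ≤ ∑ j, (M i j + M j i)) :
    IsLnatConvex (fun x => ∑ i, ∑ j, (x i : ℝ) * M i j * (x j : ℝ)) := by
  intro x y
  simp only
  set p : Fin n → ℤ := fun i => Int.fdiv (x i + y i) 2 with hp
  set q : Fin n → ℤ := fun i => Int.fdiv (x i + y i + 1) 2 with hq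
  have hfd : ∀ i, p i + q i = x i + y i ∧ q i - p i = (x i + y i) % 2 := by
    intro i
    have h1 : p i = (x i + y i) / 2 := Int.fdiv_eq_ediv_of_nonneg _ (by norm_num)
    have h2 : q i = (x i + y i + 1) / 2 := Int.fdiv_eq_ediv_of_nonneg _ (by norm_num)
    omega
  set d : Fin n → ℝ := fun i => (x i : ℝ) - (y i : ℝ) with hd
  set e : Fin n → ℝ := fun i => (q i : ℝ) - (p i : ℝ) with he
  have hq' : ∀ k, (q k : ℝ) = (x k : ℝ) + (y k : ℝ) - (p k : ℝ) := by
    intro k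
    have := (hfd k).1
    have : ((p k + q k : ℤ) : ℝ) = ((x k + y k : ℤ) : ℝ) := by rw [this]
    push_cast at this
    linarith
  have hde2 : ∀ i, (e i) ^ 2 ≤ (d i) ^ 2 := by
    intro i
    have hz : ((q i - p i : ℤ)) ^ 2 ≤ ((x i - y i : ℤ)) ^ 2 := by
      apply sq_par_le
      · have := (hfd i).2; omega
      · have := (hfd i).2; omega
      · have h1 := (hfd i).1; have h2 := (hfd i).2; omega
    have : (((q i - p i : ℤ) : ℝ)) ^ 2 ≤ (((x i - y i : ℤ) : ℝ)) ^ 2 := by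
      exact_mod_cast hz
    push_cast at this
    simpa [hd, he] using this
  have hde3 : ∀ i j, (e i - e j) ^ 2 ≤ (d i - d j) ^ 2 := by
    intro i j
    have hi1 := (hfd i).1; have hi2 := (hfd i).2
    have hj1 := (hfd j).1; have hj2 := (hfd j).2
    have hz : ((q i - p i) - (q j - p j)) ^ 2 ≤ ((x i - y i) - (x j - y j)) ^ 2 := by
      apply sq_par_le <;> omega
    have : ((((q i - p i) - (q j - p j) : ℤ)) : ℝ) ^ 2 ≤ ((((x i - y i) - (x j - y j) : ℤ)) : ℝ) ^ 2 := by
      exact_mod_cast hz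
    push_cast at this
    simpa [hd, he] using this
  -- master identity
  set A : Fin n → Fin n → ℝ := fun i j => M i j + M j i with hA
  set R : Fin n → Fin n → ℝ := fun i j =>
      A i j * ((d i) ^ 2 - (e i) ^ 2) + A i j * ((d j) ^ 2 - (e j) ^ 2)
        - A i j * ((d i - d j) ^ 2 - (e i - e j) ^ 2) with hR
  have master :
      ((∑ i, ∑ j, (x i : ℝ) * M i j * (x j : ℝ)) + (∑ i, ∑ j, (y i : ℝ) * M i j * (y j : ℝ)))
      - ((∑ i, ∑ j, (p i : ℝ) * M i j * (p j : ℝ)) + (∑ i, ∑ j, (q i : ℝ) * M i j * (q j : ℝ)))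
      = (1/8) * ∑ i, ∑ j, R i j := by
    set t : Fin n → Fin n → ℝ := fun i j =>
        (x i : ℝ) * M i j * (x j : ℝ) + (y i : ℝ) * M i j * (y j : ℝ)
        - (p i : ℝ) * M i j * (p j : ℝ) - (q i : ℝ) * M i j * (q j : ℝ)
        - (1/8) * R i j with ht
    have hsum : ∑ i, ∑ j, t i j = 0 := by
      have hsw : ∑ i, ∑ j, t i j = ∑ i, ∑ j, t j i := Finset.sum_comm
      have hpair : ∀ i j, t i j + t j i = 0 := by
        intro i j
        simp only [ht, hR, hA, hd, he]
        rw [hq' i, hq' j]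
        ring
      have h2 : (∑ i, ∑ j, t i j) + (∑ i, ∑ j, t j i) = 0 := by
        rw [← Finset.sum_add_distrib]
        simp only [← Finset.sum_add_distrib]
        calc (∑ i, ∑ j, (t i j + t j i)) = ∑ i, ∑ j, (0:ℝ) := by
              apply Finset.sum_congr rfl; intro i _; apply Finset.sum_congr rfl; intro j _
              exact hpair i j
          _ = 0 := by simp
      linarith [hsw ▸ h2]
    have expand : ∑ i, ∑ j, t i j =
        ((∑ i, ∑ j, (x i : ℝ) * M i j * (x j : ℝ)) + (∑ i, ∑ j, (y i : ℝ) * M i j * (y j : ℝ)))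
        - ((∑ i, ∑ j, (p i : ℝ) * M i j * (p j : ℝ)) + (∑ i, ∑ j, (q i : ℝ) * M i j * (q j : ℝ)))
        - (1/8) * ∑ i, ∑ j, R i j := by
      simp only [ht, Finset.sum_sub_distrib, Finset.sum_add_distrib, Finset.mul_sum]
      ring
    rw [expand] at hsum
    linarith
  -- nonnegativity of the three pieces
  have hS1 : 0 ≤ ∑ i, ∑ j, A i j * ((d i) ^ 2 - (e i) ^ 2) := by
    apply Finset.sum_nonneg; intro i _
    rw [← Finset.sum_mul]
    exact mul_nonneg (hrow i) (by linarith [hde2 i])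
  have hS2 : 0 ≤ ∑ i, ∑ j, A i j * ((d j) ^ 2 - (e j) ^ 2) := by
    rw [Finset.sum_comm]
    apply Finset.sum_nonneg; intro j _
    rw [← Finset.sum_mul]
    have : ∑ i, A i j = ∑ i, (M j i + M i j) := by
      apply Finset.sum_congr rfl; intro i _; simp [hA]; ring
    rw [this]
    have : ∑ i, (M j i + M i j) = ∑ i, (M j i + M i j) := rfl
    exact mul_nonneg (by simpa using hrow j) (by linarith [hde2 j])
  have hS3 : 0 ≤ ∑ i, ∑ j, -(A i j * ((d i - d j) ^ 2 - (e i - e j) ^ 2)) := by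
    apply Finset.sum_nonneg; intro i _
    apply Finset.sum_nonneg; intro j _
    by_cases hij : i = j
    · subst hij; simp
    · have h1 : A i j ≤ 0 := by simp only [hA]; exact hoff i j hij
      rw [neg_mul_eq_neg_mul]
      exact mul_nonneg (by linarith) (by linarith [hde3 i j])
  have hRnn : 0 ≤ ∑ i, ∑ j, R i j := by
    have : ∑ i, ∑ j, R i j
        = (∑ i, ∑ j, A i j * ((d i) ^ 2 - (e i) ^ 2))
        + (∑ i, ∑ j, A i j * ((d j) ^ 2 - (e j) ^ 2))
        + (∑ i, ∑ j, -(A i j * ((d i - d j) ^ 2 - (e i - e j) ^ 2))) := by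
      simp only [hR, Finset.sum_add_distrib, Finset.sum_sub_distrib, Finset.sum_neg_distrib]
      ring
    rw [this]
    linarith
  linarith

/-- Any quadratic on `ℤⁿ` is a difference of two `L^♮`-convex quadratics. -/
theorem stmt11 {n : ℕ} (Q Qm Qp D : Matrix (Fin n) (Fin n) ℝ)
    (hQm : ∀ i j, Qm i j = min (Q i j) 0)
    (hQp : ∀ i j, Qp i j = max (Q i j) 0)
    (hD : ∀ i j, D i j = if i = j then
        max (max (-∑ l, Qm i l) (-∑ l, Qm l i)) (max (∑ l, Qp i l) (∑ l, Qp l i)) else 0)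
    (quad : Matrix (Fin n) (Fin n) ℝ → (Fin n → ℤ) → ℝ)
    (hquad : ∀ M x, quad M x = ∑ i, ∑ j, (x i : ℝ) * M i j * (x j : ℝ)) :
    IsLnatConvex (quad (Qm + D)) ∧ IsLnatConvex (quad (-Qp + D)) ∧
    ∀ x, quad Q x = quad (Qm + D) x - quad (-Qp + D) x := by
  have hfun : ∀ M' : Matrix (Fin n) (Fin n) ℝ,
      quad M' = fun x => ∑ i, ∑ j, (x i : ℝ) * M' i j * (x j : ℝ) :=
    fun M' => funext fun x => hquad M' x
  have hDsum1 : ∀ i, ∑ j, D i j = D i i := by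
    intro i
    rw [Finset.sum_eq_single i]
    · intro b _ hb; rw [hD i b, if_neg (Ne.symm hb)]
    · intro h; exact absurd (Finset.mem_univ i) h
  have hDsum2 : ∀ i, ∑ j, D j i = D i i := by
    intro i
    rw [Finset.sum_eq_single i]
    · intro b _ hb; rw [hD b i, if_neg hb]
    · intro h; exact absurd (Finset.mem_univ i) h
  have hDii : ∀ i, D i i
      = max (max (-∑ l, Qm i l) (-∑ l, Qm l i)) (max (∑ l, Qp i l) (∑ l, Qp l i)) := by
    intro i; rw [hD i i, if_pos rfl]
  refine ⟨?_, ?_, ?_⟩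
  · rw [hfun]
    apply lnat_of_matrix
    · intro i j hij
      have h0 : D i j = 0 := by rw [hD i j, if_neg hij]
      have h0' : D j i = 0 := by rw [hD j i, if_neg (Ne.symm hij)]
      have h1 : Qm i j ≤ 0 := by rw [hQm]; exact min_le_right _ _
      have h2 : Qm j i ≤ 0 := by rw [hQm]; exact min_le_right _ _
      simp only [Matrix.add_apply, h0, h0']
      linarith
    · intro i
      have hs : ∑ j, ((Qm + D) i j + (Qm + D) j i)
          = (∑ j, Qm i j) + (∑ j, Qm j i) + ((∑ j, D i j) + (∑ j, D j i)) := by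
        simp only [Matrix.add_apply, Finset.sum_add_distrib]; ring
      rw [hs, hDsum1, hDsum2, hDii]
      have h1 : -∑ l, Qm i l ≤ max (max (-∑ l, Qm i l) (-∑ l, Qm l i))
          (max (∑ l, Qp i l) (∑ l, Qp l i)) := le_max_of_le_left (le_max_left _ _)
      have h2 : -∑ l, Qm l i ≤ max (max (-∑ l, Qm i l) (-∑ l, Qm l i))
          (max (∑ l, Qp i l) (∑ l, Qp l i)) := le_max_of_le_left (le_max_right _ _)
      linarith
  · rw [hfun]
    apply lnat_of_matrix
    · intro i j hij
      have h0 : D i j = 0 := by rw [hD i j, if_neg hij]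
      have h0' : D j i = 0 := by rw [hD j i, if_neg (Ne.symm hij)]
      have h1 : 0 ≤ Qp i j := by rw [hQp]; exact le_max_right _ _
      have h2 : 0 ≤ Qp j i := by rw [hQp]; exact le_max_right _ _
      simp only [Matrix.add_apply, Matrix.neg_apply, h0, h0']
      linarith
    · intro i
      have hterm : ∀ jj, (-Qp + D) i jj + (-Qp + D) jj i
          = (D i jj + D jj i) - (Qp i jj + Qp jj i) := by
        intro jj; simp only [Matrix.add_apply, Matrix.neg_apply]; ring
      rw [Finset.sum_congr rfl fun jj _ => hterm jj, Finset.sum_sub_distrib,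
        Finset.sum_add_distrib, Finset.sum_add_distrib, hDsum1, hDsum2, hDii]
      have h1 : ∑ l, Qp i l ≤ max (max (-∑ l, Qm i l) (-∑ l, Qm l i))
          (max (∑ l, Qp i l) (∑ l, Qp l i)) := le_max_of_le_right (le_max_left _ _)
      have h2 : ∑ l, Qp l i ≤ max (max (-∑ l, Qm i l) (-∑ l, Qm l i))
          (max (∑ l, Qp i l) (∑ l, Qp l i)) := le_max_of_le_right (le_max_right _ _)
      linarith
  · intro x
    rw [hquad, hquad, hquad, ← Finset.sum_sub_distrib]
    apply Finset.sum_congr rfl; intro i _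
    rw [← Finset.sum_sub_distrib]
    apply Finset.sum_congr rfl; intro j _
    have : Qm i j + Qp i j = Q i j := by rw [hQm, hQp]; have := min_add_max (Q i j) (0:ℝ); linarith
    simp only [Matrix.add_apply, Matrix.neg_apply]
    linear_combination (-(x i : ℝ) * (x j : ℝ)) * this
end

section
/- Let F: {0,…,k−1}^n → ℝ be normalized submodular and non-decreasing. Then every subgradient Y of its continuous extension f↓ (constructed from a non-increasing permutation as in the definition of the extension) has all entries non-negative and satisfies ‖Y‖_F ≤ ‖Y‖_{1,1} = F((k−1)·𝟙); hence f↓ is F((k−1)𝟙)-Lipschitz with respect to the Frobenius norm. -/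
/-- The increasing chain `y⁰ = 0`, `yⁱ⁺¹ = yⁱ + e_{pᵢ}` associated with a
permutation `e` of the entries of an `n × (k−1)` matrix. -/
def chain {n k : ℕ} (e : Fin (n * (k - 1)) ≃ Fin n × Fin (k - 1)) : ℕ → Fin n → ℕ
  | 0 => 0
  | (i + 1) => fun j =>
      chain e i j + if h : i < n * (k - 1) then (if (e ⟨i, h⟩).1 = j then 1 else 0) else 0

lemma chain_eq_sum {n k : ℕ} (e : Fin (n * (k - 1)) ≃ Fin n × Fin (k - 1)) (i : ℕ) (j : Fin n) :
    chain e i j = ∑ m : Fin (n * (k - 1)), if (m : ℕ) < i ∧ (e m).1 = j then 1 else 0 := by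
  induction i with
  | zero => simp [chain]
  | succ i ih =>
    have hsplit : ∀ m : Fin (n * (k - 1)),
        (if (m : ℕ) < i + 1 ∧ (e m).1 = j then 1 else 0)
        = (if (m : ℕ) < i ∧ (e m).1 = j then 1 else 0)
          + (if (m : ℕ) = i ∧ (e m).1 = j then 1 else 0) := by
      intro m
      by_cases h3 : (e m).1 = j
      · simp only [h3, and_true]
        split_ifs <;> omega
      · simp [h3]
    rw [show chain e (i + 1) j = chain e i j +
        (if h : i < n * (k - 1) then (if (e ⟨i, h⟩).1 = j then 1 else 0) else 0) from rfl,
      ih]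
    simp only [hsplit, Finset.sum_add_distrib]
    congr 1
    by_cases h : i < n * (k - 1)
    · rw [dif_pos h, Finset.sum_eq_single ⟨i, h⟩]
      · simp
      · intro m _ hm
        have : (m : ℕ) ≠ i := fun hc => hm (Fin.ext hc)
        simp [this]
      · simp
    · rw [dif_neg h]
      refine (Finset.sum_eq_zero ?_).symm
      intro m _
      have : (m : ℕ) ≠ i := by omega
      simp [this]

lemma sum_indicator_eq {n k : ℕ} (e : Fin (n * (k - 1)) ≃ Fin n × Fin (k - 1)) (j : Fin n) :
    (∑ m : Fin (n * (k - 1)), if (e m).1 = j then 1 else 0) = k - 1 := by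
  rw [Fintype.sum_equiv e (fun m => if (e m).1 = j then 1 else 0)
      (fun p => if p.1 = j then 1 else 0) (fun m => rfl)]
  rw [Fintype.sum_prod_type]
  have h1 : ∀ a : Fin n, (∑ _b : Fin (k - 1), if a = j then (1:ℕ) else 0)
      = if a = j then k - 1 else 0 := by
    intro a; by_cases h : a = j <;> simp [h, Finset.card_univ]
  simp only [h1]
  simp

lemma chain_le {n k : ℕ} (e : Fin (n * (k - 1)) ≃ Fin n × Fin (k - 1)) (i : ℕ) (j : Fin n) :
    chain e i j ≤ k - 1 := by
  rw [chain_eq_sum]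
  refine le_trans ?_ (sum_indicator_eq e j).le
  apply Finset.sum_le_sum
  intro m _
  by_cases h1 : (m : ℕ) < i <;> by_cases h2 : (e m).1 = j <;> simp [h1, h2]

lemma chain_top {n k : ℕ} (e : Fin (n * (k - 1)) ≃ Fin n × Fin (k - 1)) :
    chain e (n * (k - 1)) = fun _ => k - 1 := by
  funext j
  rw [chain_eq_sum]
  refine Eq.trans ?_ (sum_indicator_eq e j)
  apply Finset.sum_congr rfl
  intro m _
  simp [m.isLt]

lemma chain_mono {n k : ℕ} (e : Fin (n * (k - 1)) ≃ Fin n × Fin (k - 1)) (i : ℕ) :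
    chain e i ≤ chain e (i + 1) := by
  intro j
  show chain e i j ≤ chain e i j + _
  exact Nat.le_add_right _ _

/-- Subgradients of the continuous extension of a normalized non-decreasing submodular
function have non-negative entries, and `‖Y‖_F ≤ ‖Y‖_{1,1} = F((k−1)𝟙)`. -/
theorem stmt13 {n k : ℕ} (hk : 1 ≤ k) (F : (Fin n → ℕ) → ℝ)
    (D : Set (Fin n → ℕ)) (hD : D = {x | ∀ i, x i ≤ k - 1})
    (hnorm : F 0 = 0)
    (hsub : ∀ x ∈ D, ∀ y ∈ D, F (x ⊓ y) + F (x ⊔ y) ≤ F x + F y)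
    (hmono : ∀ x y : Fin n → ℕ, y ∈ D → x ≤ y → F x ≤ F y)
    (X : Matrix (Fin n) (Fin (k - 1)) ℝ)
    (hbox : ∀ i j, X i j ∈ Set.Icc (0 : ℝ) 1)
    (hrow : ∀ i, ∀ j j' : Fin (k - 1), j ≤ j' → X i j' ≤ X i j)
    (e : Fin (n * (k - 1)) ≃ Fin n × Fin (k - 1))
    (hperm : ∀ i j : Fin (n * (k - 1)), i ≤ j → X (e j).1 (e j).2 ≤ X (e i).1 (e i).2)
    (Y : Matrix (Fin n) (Fin (k - 1)) ℝ)
    (hY : ∀ i : Fin (n * (k - 1)),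
      Y (e i).1 (e i).2 = F (chain e (i + 1)) - F (chain e i)) :
    (∀ a b, 0 ≤ Y a b) ∧
    Real.sqrt (∑ a, ∑ b, (Y a b) ^ 2) ≤ ∑ a, ∑ b, |Y a b| ∧
    (∑ a, ∑ b, |Y a b|) = F (fun _ => k - 1) := by
  have hD' : ∀ i : ℕ, chain e i ∈ D := by
    intro i
    rw [hD]
    exact fun j => chain_le e i j
  have hnonneg : ∀ a b, 0 ≤ Y a b := by
    intro a b
    have h := hY (e.symm (a, b))
    rw [e.apply_symm_apply] at h
    simp only at h
    rw [h]
    have := hmono (chain e (e.symm (a, b))) (chain e ((e.symm (a, b) : ℕ) + 1))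
      (hD' _) (chain_mono e _)
    linarith
  refine ⟨hnonneg, ?_, ?_⟩
  · -- sqrt part
    rw [show (∑ a, ∑ b, (Y a b) ^ 2) = ∑ p : Fin n × Fin (k - 1), (Y p.1 p.2) ^ 2 from
        (Fintype.sum_prod_type (fun p : Fin n × Fin (k - 1) => (Y p.1 p.2) ^ 2)).symm,
      show (∑ a, ∑ b, |Y a b|) = ∑ p : Fin n × Fin (k - 1), |Y p.1 p.2| from
        (Fintype.sum_prod_type (fun p : Fin n × Fin (k - 1) => |Y p.1 p.2|)).symm]
    have h1 : ∑ p : Fin n × Fin (k - 1), (Y p.1 p.2) ^ 2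
        ≤ (∑ p : Fin n × Fin (k - 1), |Y p.1 p.2|) ^ 2 := by
      calc ∑ p : Fin n × Fin (k - 1), (Y p.1 p.2) ^ 2
          = ∑ p : Fin n × Fin (k - 1), |Y p.1 p.2| ^ 2 := by simp [sq_abs]
        _ ≤ (∑ p : Fin n × Fin (k - 1), |Y p.1 p.2|) ^ 2 :=
          Finset.sum_sq_le_sq_sum_of_nonneg (fun i _ => abs_nonneg _)
    calc Real.sqrt (∑ p : Fin n × Fin (k - 1), (Y p.1 p.2) ^ 2)
        ≤ Real.sqrt ((∑ p : Fin n × Fin (k - 1), |Y p.1 p.2|) ^ 2) := Real.sqrt_le_sqrt h1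
      _ = ∑ p : Fin n × Fin (k - 1), |Y p.1 p.2| :=
          Real.sqrt_sq (Finset.sum_nonneg fun i _ => abs_nonneg _)
  · -- telescoping
    have habs : ∀ a b, |Y a b| = Y a b := fun a b => abs_of_nonneg (hnonneg a b)
    simp_rw [habs]
    rw [show (∑ a, ∑ b, Y a b) = ∑ p : Fin n × Fin (k - 1), Y p.1 p.2 from
        (Fintype.sum_prod_type (fun p : Fin n × Fin (k - 1) => Y p.1 p.2)).symm]
    rw [← Equiv.sum_comp e (fun p => Y p.1 p.2)]
    have : (∑ m : Fin (n * (k - 1)), Y (e m).1 (e m).2)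
        = ∑ m : Fin (n * (k - 1)), (F (chain e ((m : ℕ) + 1)) - F (chain e (m : ℕ))) := by
      apply Finset.sum_congr rfl
      intro m _
      exact hY m
    rw [this, Fin.sum_univ_eq_sum_range (fun m => F (chain e (m + 1)) - F (chain e m)),
      Finset.sum_range_sub (fun m => F (chain e m)), chain_top e]
    show F (fun _ => k - 1) - F (chain e 0) = F (fun _ => k - 1)
    have : chain e 0 = 0 := rfl
    rw [this, hnorm, sub_zero]
end

section
/- (Rounding property) For any normalized F: {0,…,k−1}^n → ℝ and any row non-increasing X ∈ [0,1]^{n×(k−1)} with chain y^0 = 0, y^i = y^{i−1} + e_{p_i} arising from a non-increasing permutation (p,q) of X, one has min_{0 ≤ i ≤ (k−1)n} F(y^i) ≤ f↓(X) = ∑_{i=1}^{(k−1)n} X_{p_i,q_i}(F(y^i) − F(y^{i−1})). -/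
/-- Rounding property: some chain point has `F`-value at most the value of the
continuous extension. -/
theorem stmt16 {n k : ℕ} (hk : 1 ≤ k) (F : (Fin n → ℕ) → ℝ) (hnorm : F 0 = 0)
    (X : Matrix (Fin n) (Fin (k - 1)) ℝ)
    (hbox : ∀ i j, X i j ∈ Set.Icc (0 : ℝ) 1)
    (hrow : ∀ i, ∀ j j' : Fin (k - 1), j ≤ j' → X i j' ≤ X i j)
    (e : Fin (n * (k - 1)) ≃ Fin n × Fin (k - 1))
    (hperm : ∀ i j : Fin (n * (k - 1)), i ≤ j → X (e j).1 (e j).2 ≤ X (e i).1 (e i).2) :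
    ∃ i ≤ n * (k - 1),
      F (chain e i) ≤ ∑ i : Fin (n * (k - 1)),
        X (e i).1 (e i).2 * (F (chain e (i + 1)) - F (chain e i)) := by
  set a : ℕ → ℝ := fun t => if h : t < (n * (k - 1)) then X (e ⟨t, h⟩).1 (e ⟨t, h⟩).2 else 0 with ha
  obtain ⟨i₀, hi₀mem, hi₀min⟩ := Finset.exists_min_image (Finset.range ((n * (k - 1)) + 1))
    (fun i => F (chain e i)) ⟨0, by simp⟩
  set m := F (chain e i₀) with hm
  have hch0 : chain e 0 = 0 := rfl
  have hm0 : m ≤ 0 := by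
    have := hi₀min 0 (by simp)
    simpa [hch0, hnorm] using this
  have hmle : ∀ i, i ≤ (n * (k - 1)) → m ≤ F (chain e i) := fun i hi =>
    hi₀min i (Finset.mem_range.mpr (Nat.lt_succ_of_le hi))
  have ha_nonneg : ∀ t, 0 ≤ a t := by
    intro t
    by_cases h : t < (n * (k - 1)) <;> simp [ha, h]
    exact (hbox _ _).1
  have ha_le1 : a 0 ≤ 1 := by
    by_cases h : 0 < (n * (k - 1)) <;> simp [ha, h]
    exact (hbox _ _).2
  have ha_mono : ∀ t, a (t + 1) ≤ a t := by
    intro t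
    by_cases h : t + 1 < (n * (k - 1))
    · have h' : t < (n * (k - 1)) := by omega
      simp only [ha, dif_pos h, dif_pos h']
      exact hperm ⟨t, h'⟩ ⟨t + 1, h⟩ (by simp [Fin.le_def])
    · by_cases h' : t < (n * (k - 1)) <;> simp [ha, h, h']
      exact (hbox _ _).1
  have key : ∀ t, t ≤ (n * (k - 1)) →
      a t * F (chain e t) + (a 0 - a t) * m ≤
        ∑ i ∈ Finset.range t, a i * (F (chain e (i + 1)) - F (chain e i)) := by
    intro t
    induction t with
    | zero => intro _; simp [hch0, hnorm]
    | succ t ih =>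
      intro h
      have iht := ih (by omega)
      rw [Finset.sum_range_succ]
      have h1 : m ≤ F (chain e (t + 1)) := hmle _ h
      have h2 : a (t + 1) ≤ a t := ha_mono t
      nlinarith [mul_nonneg (sub_nonneg.2 h2) (sub_nonneg.2 h1)]
  have final := key (n * (k - 1)) le_rfl
  have haN : a (n * (k - 1)) = 0 := by simp [ha]
  refine ⟨i₀, Nat.lt_succ_iff.mp (Finset.mem_range.mp hi₀mem), ?_⟩
  have hsum : ∑ i : Fin (n * (k - 1)), X (e i).1 (e i).2 * (F (chain e (i + 1)) - F (chain e i)) =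
      ∑ i ∈ Finset.range (n * (k - 1)), a i * (F (chain e (i + 1)) - F (chain e i)) := by
    rw [← Fin.sum_univ_eq_sum_range]
    refine Finset.sum_congr rfl fun i _ => ?_
    simp [ha, i.isLt]
  rw [hsum]
  rw [haN] at final
  nlinarith [final, ha_le1, hm0]
end
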